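/- arXiv:2005.03158 — 7 statements merged into one kernel-verified Lean document; each statement's English description precedes it below -/
import Mathlib

section
/- The 6-uniform morphism φ on Σ₈ locates words of length 6: for each word u of length 6 on Σ₈, there exists an integer m such that for all words v on Σ₈, every occurrence of u as a factor of φ(v) begins at a position congruent to m modulo 6. -/
abbrev Sigma8 := ℤ × Fin 8

def phiAux (n : ℤ) : ℕ → List Sigma8
  | 0 => [(0,0),(1,1),(0,2),(0,3),(1,4),(n+3,5)]
  | 1 => [(1,6),(1,7),(0,0),(0,1),(0,2),(n+2,3)]
  | 2 => [(1,4),(1,5),(1,6),(0,7),(0,0),(n+3,1)]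
  | 3 => [(0,2),(1,3),(1,4),(0,5),(1,6),(n+2,7)]
  | 4 => [(0,0),(1,1),(0,2),(0,3),(1,4),(n+1,5)]
  | 5 => [(1,6),(1,7),(0,0),(0,1),(0,2),(n+2,3)]
  | 6 => [(1,4),(1,5),(1,6),(0,7),(0,0),(n+1,1)]
  | 7 => [(0,2),(1,3),(1,4),(0,5),(1,6),(n+2,7)]
  | _ => []

/-- The 6-uniform morphism φ on Σ₈, on a single letter. -/
def phi (a : Sigma8) : List Sigma8 := phiAux a.1 a.2.val

/-- φ extended to words by concatenation. -/
def phiW (w : List Sigma8) : List Sigma8 := w.flatMap phi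

/-- A word on Σ₈ is subscript-increasing if subscripts increase by 1 mod 8
from each letter to the next. -/
def SubIncr (w : List Sigma8) : Prop :=
  ∀ i : ℕ, (h : i + 1 < w.length) →
    (w.get ⟨i + 1, h⟩).2 = (w.get ⟨i, Nat.lt_of_succ_lt h⟩).2 + 1

/-- A 5/4-power: a word of the form x y x with x nonempty and |y| = 3|x|
(equivalently |xy| = 4|x|). -/
def IsPow54 {α : Type*} (w : List α) : Prop :=
  ∃ x y : List α, x ≠ [] ∧ y.length = 3 * x.length ∧ w = x ++ y ++ x

/-!
Every length-6 factor of a φ-image sits inside φ(a)φ(b) for two letters a, b, starting at the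
position of the occurrence mod 6. Away from the last letter of each block, φ(n_j) does not depend
on n, and it depends on j only through j mod 4. Erasing the n-dependent entry turns the images into
four skeletons with a wildcard, and the finitely many length-6 windows of pairs of skeletons can
only agree, wildcards permitting, when they start at the same offset.
-/

section UniformMorphism

variable {α β : Type*} {f : α → List β} {k : ℕ}

theorem drop_flatMap_of_length_eq (hf : ∀ a, (f a).length = k) (v : List α) (q : ℕ) :
    (v.flatMap f).drop (k * q) = (v.drop q).flatMap f := by
  induction v generalizing q with
  | nil => simp
  | cons a v ih =>
    cases q with
    | zero => simp
    | succ q =>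
      have hlen : k * (q + 1) = (f a).length + k * q := by rw [hf]; ring
      rw [List.flatMap_cons, hlen, List.drop_length_add_append, ih, List.drop_succ_cons]

theorem exists_prefix_drop_mod_of_prefix_drop_flatMap (hf : ∀ a, (f a).length = k)
    {u : List β} (hu₀ : u ≠ []) (hu : u.length ≤ k) {v : List α} {p : ℕ}
    (h : u <+: (v.flatMap f).drop p) : ∃ a b, u <+: (f a ++ f b).drop (p % k) := by
  have hk : 0 < k := lt_of_lt_of_le (List.length_pos_iff.mpr hu₀) hu
  have hr : p % k < k := Nat.mod_lt p hk
  rw [← Nat.div_add_mod p k, ← List.drop_drop, drop_flatMap_of_length_eq hf] at h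
  obtain ⟨a, t, hat⟩ : ∃ a t, v.drop (p / k) = a :: t := by
    refine List.exists_cons_of_ne_nil fun hnil => hu₀ ?_
    simpa [hnil] using h
  -- appending a letter to the word makes sure that the occurrence is followed by a whole block
  obtain ⟨b, t', htb⟩ := List.exists_cons_of_ne_nil (List.concat_ne_nil a t)
  have hpad : u <+: (f a ++ f b).drop (p % k) ++ t'.flatMap f := by
    have := h.trans ((List.prefix_append _ ([a].flatMap f)).drop (p % k))
    rwa [hat, ← List.flatMap_append, List.cons_append, htb, List.flatMap_cons, List.flatMap_cons,
      ← List.append_assoc, List.drop_append_of_le_length (by simp only [List.length_append, hf]; omega)] at this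
  refine ⟨a, b, List.prefix_of_prefix_length_le hpad (List.prefix_append _ _) ?_⟩
  simp only [List.length_drop, List.length_append, hf]
  omega

end UniformMorphism

theorem phi_length (a : Sigma8) : (phi a).length = 6 := by
  obtain ⟨n, j⟩ := a
  fin_cases j <;> rfl

/-- A pattern letter `(none, j)` is a wildcard for every letter `n_j`. -/
def Fits (x : Sigma8) (e : Option ℤ × Fin 8) : Prop :=
  x.2 = e.2 ∧ ∀ n ∈ e.1, x.1 = n

def Compatible (e e' : Option ℤ × Fin 8) : Prop :=
  e.2 = e'.2 ∧ ∀ n ∈ e.1, ∀ n' ∈ e'.1, n = n'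

instance : DecidableRel Compatible := fun _ _ => inferInstanceAs (Decidable (_ ∧ _))

theorem compatible_of_fits {x : Sigma8} {e e' : Option ℤ × Fin 8} (h : Fits x e) (h' : Fits x e') :
    Compatible e e' :=
  ⟨h.1.symm.trans h'.1, fun n hn n' hn' => (h.2 n hn).symm.trans (h'.2 n' hn')⟩

theorem forall₂_compatible_of_forall₂_fits {w : List Sigma8} {s s' : List (Option ℤ × Fin 8)}
    (h : List.Forall₂ Fits w s) (h' : List.Forall₂ Fits w s') : List.Forall₂ Compatible s s' := by
  induction h generalizing s' with
  | nil => cases h'; exact .nil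
  | cons hx _ ih =>
    cases h' with
    | cons hx' h't => exact .cons (compatible_of_fits hx hx') (ih h't)

def skeleton : Fin 4 → List (Option ℤ × Fin 8)
  | 0 => [(some 0, 0), (some 1, 1), (some 0, 2), (some 0, 3), (some 1, 4), (none, 5)]
  | 1 => [(some 1, 6), (some 1, 7), (some 0, 0), (some 0, 1), (some 0, 2), (none, 3)]
  | 2 => [(some 1, 4), (some 1, 5), (some 1, 6), (some 0, 7), (some 0, 0), (none, 1)]
  | 3 => [(some 0, 2), (some 1, 3), (some 1, 4), (some 0, 5), (some 1, 6), (none, 7)]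

theorem forall₂_fits_phi_skeleton (a : Sigma8) :
    List.Forall₂ Fits (phi a) (skeleton (Fin.ofNat 4 a.2)) := by
  obtain ⟨n, j⟩ := a
  fin_cases j <;> simp [phi, phiAux, skeleton, Fits, Fin.ofNat]

def skeletonWindow (r : ℕ) (j j' : Fin 4) : List (Option ℤ × Fin 8) :=
  ((skeleton j ++ skeleton j').drop r).take 6

theorem eq_of_forall₂_compatible_skeletonWindow : ∀ (r r' : Fin 6) (j₁ j₂ j₁' j₂' : Fin 4),
    List.Forall₂ Compatible (skeletonWindow r j₁ j₂) (skeletonWindow r' j₁' j₂') →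
      (r : ℕ) = r' := by
  decide

theorem forall₂_fits_skeletonWindow {u : List Sigma8} (hu : u.length = 6) {a b : Sigma8} {r : ℕ}
    (h : u <+: (phi a ++ phi b).drop r) :
    List.Forall₂ Fits u (skeletonWindow r (Fin.ofNat 4 a.2) (Fin.ofNat 4 b.2)) := by
  rw [List.prefix_iff_eq_take.mp h, hu]
  exact List.forall₂_take 6 (List.forall₂_drop r
    (List.rel_append (forall₂_fits_phi_skeleton a) (forall₂_fits_phi_skeleton b)))

theorem mod_six_eq_of_prefix_drop_phiW {u : List Sigma8} (hu : u.length = 6)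
    {v v' : List Sigma8} {p p' : ℕ} (h : u <+: (phiW v).drop p) (h' : u <+: (phiW v').drop p') :
    p % 6 = p' % 6 := by
  have hu₀ : u ≠ [] := List.ne_nil_of_length_pos (by omega)
  obtain ⟨a, b, hab⟩ :=
    exists_prefix_drop_mod_of_prefix_drop_flatMap phi_length hu₀ hu.le h
  obtain ⟨a', b', hab'⟩ :=
    exists_prefix_drop_mod_of_prefix_drop_flatMap phi_length hu₀ hu.le h'
  exact eq_of_forall₂_compatible_skeletonWindow ⟨p % 6, p.mod_lt (by norm_num)⟩
    ⟨p' % 6, p'.mod_lt (by norm_num)⟩ _ _ _ _ (forall₂_compatible_of_forall₂_fits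
      (forall₂_fits_skeletonWindow hu hab) (forall₂_fits_skeletonWindow hu hab'))

/-- φ locates words of length 6. -/
theorem stmt2 :
    ∀ u : List Sigma8, u.length = 6 →
      ∃ m : ℕ, ∀ v : List Sigma8, ∀ p : ℕ,
        u <+: (phiW v).drop p → p % 6 = m % 6 := by
  intro u hu
  by_cases hocc : ∃ v p, u <+: (phiW v).drop p
  · obtain ⟨v₀, p₀, h₀⟩ := hocc
    exact ⟨p₀, fun v p h => mod_six_eq_of_prefix_drop_phiW hu h h₀⟩
  · exact ⟨0, fun v p h => (hocc ⟨v, p, h⟩).elim⟩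
end

section
/- For every word w on Σ₈, the set of letters with even subscripts occurring in φ(w) is a subset of {0₀, 0₂, 1₄, 1₆}. Moreover, if w is subscript-increasing, then the subsequence of letters of φ(w) having even subscripts is a factor of the periodic word (0₀ 0₂ 1₄ 1₆)^ω. -/
/-! ### Auxiliary material -/

abbrev evenP : Sigma8 → Bool := fun a => a.2.val % 2 == 0

@[simp] lemma fv0 : ((0:Fin 8):ℕ) = 0 := rfl
@[simp] lemma fv1 : ((1:Fin 8):ℕ) = 1 := rfl
@[simp] lemma fv2 : ((2:Fin 8):ℕ) = 2 := rfl
@[simp] lemma fv3 : ((3:Fin 8):ℕ) = 3 := rfl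
@[simp] lemma fv4 : ((4:Fin 8):ℕ) = 4 := rfl
@[simp] lemma fv5 : ((5:Fin 8):ℕ) = 5 := rfl
@[simp] lemma fv6 : ((6:Fin 8):ℕ) = 6 := rfl
@[simp] lemma fv7 : ((7:Fin 8):ℕ) = 7 := rfl

def base : List Sigma8 := [((0:ℤ),(0:Fin 8)), (0,2), (1,4), (1,6)]

def period (m : ℕ) : List Sigma8 := (List.replicate m base).flatten

lemma period_zero : period 0 = [] := rfl
lemma period_succ (m : ℕ) : period (m+1) = base ++ period m := by
  simp [period, List.replicate_succ]
lemma period_succ' (m : ℕ) : period (m+1) = period m ++ base := by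
  rw [period, period, List.replicate_succ', List.flatten_append]; rfl

lemma period3 (m : ℕ) : period (m+3) = base ++ (base ++ (base ++ period m)) := by
  rw [show m+3 = (m+2)+1 from rfl, period_succ, show m+2 = (m+1)+1 from rfl,
    period_succ, period_succ]

lemma prefix_append_left {α : Type*} {u v : List α} (x : List α) (h : u <+: v) :
    x ++ u <+: x ++ v := by
  obtain ⟨t, ht⟩ := h; exact ⟨t, by rw [List.append_assoc, ht]⟩

lemma pcons (m : ℕ) : period m <+: base ++ period m :=
  ⟨base, by rw [← period_succ', period_succ]⟩

lemma pcons2 (m : ℕ) : period m <+: base ++ (base ++ period m) :=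
  (pcons m).trans (prefix_append_left base (pcons m))

def off : Fin 8 → ℕ
  | 0 => 0 | 1 => 3 | 2 => 2 | 3 => 1 | 4 => 0 | 5 => 3 | 6 => 2 | 7 => 1

@[simp] lemma offm0 : off ⟨0, by omega⟩ = 0 := rfl
@[simp] lemma offm1 : off ⟨1, by omega⟩ = 3 := rfl
@[simp] lemma offm2 : off ⟨2, by omega⟩ = 2 := rfl
@[simp] lemma offm3 : off ⟨3, by omega⟩ = 1 := rfl
@[simp] lemma offm4 : off ⟨4, by omega⟩ = 0 := rfl
@[simp] lemma offm5 : off ⟨5, by omega⟩ = 3 := rfl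
@[simp] lemma offm6 : off ⟨6, by omega⟩ = 2 := rfl
@[simp] lemma offm7 : off ⟨7, by omega⟩ = 1 := rfl
@[simp] lemma offs0 : off ((⟨0, by omega⟩ : Fin 8) + 1) = 3 := rfl
@[simp] lemma offs1 : off ((⟨1, by omega⟩ : Fin 8) + 1) = 2 := rfl
@[simp] lemma offs2 : off ((⟨2, by omega⟩ : Fin 8) + 1) = 1 := rfl
@[simp] lemma offs3 : off ((⟨3, by omega⟩ : Fin 8) + 1) = 0 := rfl
@[simp] lemma offs4 : off ((⟨4, by omega⟩ : Fin 8) + 1) = 3 := rfl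
@[simp] lemma offs5 : off ((⟨5, by omega⟩ : Fin 8) + 1) = 2 := rfl
@[simp] lemma offs6 : off ((⟨6, by omega⟩ : Fin 8) + 1) = 1 := rfl
@[simp] lemma offs7 : off ((⟨7, by omega⟩ : Fin 8) + 1) = 0 := rfl

lemma key_step (n : ℤ) (j : Fin 8) (m : ℕ) :
    (phi (n, j)).filter evenP ++ (period m).drop (off (j+1)) <+:
      (period (m+2)).drop (off j) := by
  fin_cases j <;> cases m with
  | zero =>
      simp only [offm0, offm1, offm2, offm3, offm4, offm5, offm6, offm7,
        offs0, offs1, offs2, offs3, offs4, offs5, offs6, offs7,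
        period_zero, List.drop_nil, List.append_nil,
        show (0:ℕ)+2 = 2 from rfl]
      simp only [phi, phiAux, List.filter_cons, evenP, fv0, fv1, fv2, fv3, fv4, fv5, fv6, fv7]
      norm_num [show period 2 = base ++ (base ++ []) from by
        rw [show (2:ℕ) = 1+1 from rfl, period_succ, period_succ, period_zero], base]
  | succ m =>
      rw [show m+1+2 = m+3 from rfl, period3 m, period_succ m]
      simp only [offm0, offm1, offm2, offm3, offm4, offm5, offm6, offm7,
        offs0, offs1, offs2, offs3, offs4, offs5, offs6, offs7]
      simp only [phi, phiAux, List.filter_cons, evenP, fv0, fv1, fv2, fv3, fv4, fv5, fv6, fv7]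
      norm_num [base, List.cons_prefix_cons]
      first
      | exact pcons m
      | exact pcons2 m
      | skip

lemma subIncr_tail {a : Sigma8} {w : List Sigma8} (h : SubIncr (a :: w)) : SubIncr w := by
  intro i hi
  have h2 : i + 1 + 1 < (a :: w).length := by simpa using Nat.succ_lt_succ hi
  have := h (i+1) h2
  simpa using this

lemma main_prefix : ∀ w : List Sigma8, SubIncr w → ∀ j : Fin 8, (∀ p ∈ w.head?, p.2 = j) →
    ((phiW w).filter evenP) <+: (period (2 * w.length)).drop (off j) := by
  intro w
  induction w with
  | nil => intro _ j _; simp [phiW]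
  | cons a w' ih =>
      intro hs j hh
      have hj : a.2 = j := hh a rfl
      have hs' : SubIncr w' := subIncr_tail hs
      have hh' : ∀ p ∈ w'.head?, p.2 = j + 1 := by
        cases w' with
        | nil => intro p hp; simp at hp
        | cons b w'' =>
            intro p hp
            simp only [List.head?_cons, Option.mem_def, Option.some.injEq] at hp
            subst hp
            have := hs 0 (by simp)
            simpa [hj] using this
      have hkey := key_step a.1 j (2 * w'.length)
      have hphi : phi (a.1, j) = phi a := by rw [← hj]
      rw [hphi] at hkey
      have h1 : (phiW (a :: w')).filter evenP
          = (phi a).filter evenP ++ (phiW w').filter evenP := by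
        simp [phiW, List.filter_append]
      rw [h1, show 2 * (a :: w').length = 2 * w'.length + 2 from by simp [List.length_cons]; ring]
      exact (prefix_append_left _ (ih hs' (j+1) hh')).trans hkey

/-- Even-subscript letters in images under φ. -/
theorem stmt7 :
    (∀ w : List Sigma8, ∀ a ∈ phiW w, a.2.val % 2 = 0 →
      a ∈ ([((0:ℤ),(0:Fin 8)), (0,2), (1,4), (1,6)] : List Sigma8)) ∧
    (∀ w : List Sigma8, SubIncr w →
      ∃ m : ℕ, (phiW w).filter (fun a => a.2.val % 2 == 0) <:+:
        (List.replicate m ([((0:ℤ),(0:Fin 8)), (0,2), (1,4), (1,6)] : List Sigma8)).flatten) := by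
  constructor
  · intro w a ha hev
    obtain ⟨b, hb, hab⟩ := List.mem_flatMap.1 ha
    have h8 : (b.2:ℕ) < 8 := b.2.isLt
    have hc : (b.2:ℕ) = 0 ∨ (b.2:ℕ) = 1 ∨ (b.2:ℕ) = 2 ∨ (b.2:ℕ) = 3 ∨ (b.2:ℕ) = 4 ∨
        (b.2:ℕ) = 5 ∨ (b.2:ℕ) = 6 ∨ (b.2:ℕ) = 7 := by omega
    rcases hc with h|h|h|h|h|h|h|h <;>
      · rw [phi, h] at hab
        simp only [phiAux, List.mem_cons, List.not_mem_nil, or_false] at hab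
        rcases hab with rfl|rfl|rfl|rfl|rfl|rfl <;>
          first | (simp only [fv1, fv3, fv5, fv7] at hev; omega) | simp
  · intro w hs
    cases w with
    | nil => exact ⟨0, by simp [phiW]⟩
    | cons a w' =>
        have hh : ∀ p ∈ (a :: w').head?, p.2 = a.2 := by
          intro p hp
          simp only [List.head?_cons, Option.mem_def, Option.some.injEq] at hp
          subst hp; rfl
        obtain ⟨t, ht⟩ := main_prefix (a :: w') hs a.2 hh
        refine ⟨2 * (a :: w').length,
          ⟨(period (2 * (a :: w').length)).take (off a.2), t, ?_⟩⟩
        show _ ++ _ ++ _ = period (2 * (a :: w').length)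
        rw [List.append_assoc, ht, List.take_append_drop]
end

section
/- Let n be a symbol and N ⊇ {−3, −2, ..., 4} a set of integers. If two letters α, β ∈ {0, 1, ..., 5} ∪ {n+1, n+2, n+3} are possibly equal with respect to N, then they are possibly equal with respect to {−3, −2, ..., 4}. -/
/-- A letter is either a concrete integer (`inl c`) or symbolic `n + d` (`inr d`). -/
def evalL (m : ℤ) : ℤ ⊕ ℤ → ℤ
  | .inl c => c
  | .inr d => m + d

/-- α and β are possibly equal with respect to N. -/
def PEq (N : Set ℤ) (α β : ℤ ⊕ ℤ) : Prop :=
  ∃ m ∈ N, ∃ m' ∈ N, evalL m α = evalL m' β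

/-- Letters belonging to {0,1,...,5} ∪ {n+1, n+2, n+3}. -/
def GoodLetter (α : ℤ ⊕ ℤ) : Prop :=
  (∃ c : ℤ, α = .inl c ∧ 0 ≤ c ∧ c ≤ 5) ∨ (∃ d : ℤ, α = .inr d ∧ 1 ≤ d ∧ d ≤ 3)

theorem stmt9 (N : Set ℤ) (hN : Set.Icc (-3 : ℤ) 4 ⊆ N)
    (α β : ℤ ⊕ ℤ) (hα : GoodLetter α) (hβ : GoodLetter β)
    (h : PEq N α β) : PEq (Set.Icc (-3 : ℤ) 4) α β := by
  rcases hα with ⟨c, rfl, hc0, hc5⟩ | ⟨d, rfl, hd1, hd3⟩ <;>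
    rcases hβ with ⟨c', rfl, hc0', hc5'⟩ | ⟨d', rfl, hd1', hd3'⟩
  · -- inl, inl : use h to get c = c'
    obtain ⟨m, _, m', _, he⟩ := h
    exact ⟨0, by simp, 0, by simp, he⟩
  · -- inl, inr : m' = c - d'
    exact ⟨0, by simp, c - d', by simp [Set.mem_Icc]; omega, by simp [evalL]⟩
  · -- inr, inl
    exact ⟨c' - d, by simp [Set.mem_Icc]; omega, 0, by simp, by simp [evalL]⟩
  · -- inr, inr
    exact ⟨0, by simp, d - d', by simp [Set.mem_Icc]; omega, by simp [evalL]⟩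
end

section
/- Let k ≥ 2 and ℓ ≥ 1. Let d(i) and u(i) be periodic integer sequences with period lengths ℓ and kℓ respectively, and let r, s be nonnegative integers with r − s + k − 1 ≥ 0. Let w(i) be an integer sequence such that for all 0 ≤ m ≤ k−1 and all i ≥ 0: w(ki + r + m) = u(ki + m) if 0 ≤ m ≤ k−2, and w(ki + r + k − 1) = w(i + s) + d(i). Then the sequence w is k-regular, i.e., the ℚ-vector space spanned by its k-kernel is finite-dimensional. -/
/-!
Write `w_{a,b}` for `i ↦ w (a * i + b - a)`. For `a = k * a'` with `a ≥ r + D`, where `D` bounds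
the offset `b - a`, the residue of `a * i + b - r` modulo `k` does not depend on `i`. If it is at
most `k - 2`, the first recurrence makes `w_{a,b}` a subsequence of the periodic `u`; if it is
`k - 1`, the second makes `w_{a,b} - w_{a',b'}` a subsequence of the periodic `d`, with the new
offset `b' - a'` again in the window `[-D, a' + D]`. Descending from `a = k ^ e`, every kernel
sequence therefore lies, up to its value at `0`, in the span of the finitely many `w_{k^e,b}`
with `e` bounded and of the periodic sequences.
-/

/-- The k-kernel of an integer sequence, viewed inside the ℚ-vector space ℕ → ℚ. -/
def kKernel (k : ℕ) (w : ℕ → ℤ) : Set (ℕ → ℚ) :=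
  {f | ∃ e j : ℕ, j < k ^ e ∧ f = fun i => ((w (k ^ e * i + j) : ℤ) : ℚ)}

/-- A sequence is k-regular if the ℚ-vector space generated by its k-kernel is
finite-dimensional. -/
def kRegular (k : ℕ) (w : ℕ → ℤ) : Prop :=
  FiniteDimensional ℚ (Submodule.span ℚ (kKernel k w))

open Function

def periodicFrom (K : Type*) [Field K] (N p : ℕ) : Submodule K (ℕ → K) where
  carrier := {f | ∀ i, N ≤ i → f (i + p) = f i}
  add_mem' hf hg i hi := by simp [hf i hi, hg i hi]
  zero_mem' _ _ := rfl
  smul_mem' c f hf i hi := by simp [hf i hi]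

section PeriodicFrom

variable {K : Type*} [Field K] {N p : ℕ}

theorem periodicFrom.eq_of_forall_lt (hp : 0 < p) {f g : ℕ → K} (hf : f ∈ periodicFrom K N p)
    (hg : g ∈ periodicFrom K N p) (hfg : ∀ i < N + p, f i = g i) : f = g := by
  funext i
  induction i using Nat.strong_induction_on with
  | _ i ih =>
    by_cases hi : i < N + p
    · exact hfg i hi
    · obtain ⟨j, rfl⟩ : ∃ j, i = j + p := ⟨i - p, by omega⟩
      rw [hf j (by omega), hg j (by omega), ih j (by omega)]

theorem finiteDimensional_periodicFrom (hp : 0 < p) : FiniteDimensional K (periodicFrom K N p) :=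
  FiniteDimensional.of_injective
    (LinearMap.funLeft K K (fun j : Fin (N + p) => (j : ℕ)) ∘ₗ (periodicFrom K N p).subtype)
    fun f g hfg => Subtype.ext <| periodicFrom.eq_of_forall_lt hp f.2 g.2 fun i hi =>
      congrFun hfg ⟨i, hi⟩

end PeriodicFrom

/-- For `i ≥ 1` this is `w (a * i + (b - a))` with an offset `b - a` that may be negative; the
junk value at `i = 0` is harmless since everything is done modulo `periodicFrom ℚ 1 p`. -/
def shiftedSubseq (w : ℕ → ℤ) (a b : ℕ) : ℕ → ℚ := fun i => w (a * (i - 1) + b)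

theorem shiftedSubseq_add_self (w : ℕ → ℤ) (a j : ℕ) {i : ℕ} (hi : 1 ≤ i) :
    shiftedSubseq w a (a + j) i = w (a * i + j) := by
  obtain ⟨i, rfl⟩ : ∃ i', i = i' + 1 := ⟨i - 1, by omega⟩
  simp only [shiftedSubseq, Nat.add_sub_cancel, mul_add, mul_one, add_assoc]

section Recurrence

variable {k r s p : ℕ} {u d w : ℕ → ℤ}

theorem apply_eq_of_mod_le_sub_two
    (hw1 : ∀ i m : ℕ, m ≤ k - 2 → w (k * i + r + m) = u (k * i + m))
    {n : ℕ} (hn : r ≤ n) (hm : (n - r) % k ≤ k - 2) : w n = u (n - r) := by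
  have h := Nat.div_add_mod (n - r) k
  calc w n = w (k * ((n - r) / k) + r + (n - r) % k) := by congr 1; omega
    _ = u (n - r) := by rw [hw1 _ _ hm, h]

theorem apply_eq_of_mod_eq_sub_one (hw2 : ∀ i : ℕ, w (k * i + r + (k - 1)) = w (i + s) + d i)
    {n : ℕ} (hn : r ≤ n) (hm : (n - r) % k = k - 1) :
    w n = w ((n - r) / k + s) + d ((n - r) / k) := by
  have h := Nat.div_add_mod (n - r) k
  rw [← hw2]
  congr 1
  omega

theorem shiftedSubseq_mem_periodicFrom_of_mod_le_sub_two
    (hw1 : ∀ i m : ℕ, m ≤ k - 2 → w (k * i + r + m) = u (k * i + m))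
    (hu : Periodic u p) {b : ℕ} (hb : r ≤ b) (hm : (b - r) % k ≤ k - 2) (a : ℕ) :
    shiftedSubseq w (k * a) b ∈ periodicFrom ℚ 1 p := by
  have hval : ∀ i, shiftedSubseq w (k * a) b i = u (k * a * (i - 1) + (b - r)) := by
    intro i
    have hsub : k * a * (i - 1) + b - r = k * (a * (i - 1)) + (b - r) := by
      rw [← mul_assoc]; omega
    rw [shiftedSubseq, apply_eq_of_mod_le_sub_two hw1 (by omega)
      (by rwa [hsub, Nat.mul_add_mod]), hsub, mul_assoc]
  intro i hi
  have hper : Periodic u (k * a * p) := by simpa using hu.nat_mul (k * a)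
  rw [hval, hval, show i + p - 1 = i - 1 + p by omega, mul_add, add_right_comm, hper]

theorem shiftedSubseq_sub_mem_periodicFrom_of_mod_eq_sub_one (hk : 0 < k)
    (hw2 : ∀ i : ℕ, w (k * i + r + (k - 1)) = w (i + s) + d i)
    (hd : Periodic d p) {b : ℕ} (hb : r ≤ b) (hm : (b - r) % k = k - 1) (a : ℕ) :
    shiftedSubseq w (k * a) b - shiftedSubseq w a ((b - r) / k + s) ∈ periodicFrom ℚ 1 p := by
  have hval : ∀ i, (shiftedSubseq w (k * a) b - shiftedSubseq w a ((b - r) / k + s)) i =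
      d (a * (i - 1) + (b - r) / k) := by
    intro i
    have hsub : k * a * (i - 1) + b - r = k * (a * (i - 1)) + (b - r) := by
      rw [← mul_assoc]; omega
    rw [Pi.sub_apply, shiftedSubseq, shiftedSubseq, apply_eq_of_mod_eq_sub_one hw2 (by omega)
      (by rwa [hsub, Nat.mul_add_mod]), hsub, Nat.mul_add_div hk, add_assoc]
    push_cast
    ring
  intro i hi
  have hper : Periodic d (a * p) := by simpa using hd.nat_mul a
  rw [hval, hval, show i + p - 1 = i - 1 + p by omega, mul_add, add_right_comm, hper]

theorem bounds_sub_div_add (hk : 2 ≤ k) {D a b : ℕ} (hD : r + k + k * s ≤ D) (hb : r ≤ b)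
    (hlow : k * a ≤ b + D) (hhigh : b ≤ 2 * (k * a) + D) :
    a ≤ (b - r) / k + s + D ∧ (b - r) / k + s ≤ 2 * a + D := by
  obtain ⟨t, rfl⟩ : ∃ t, b = t + r := ⟨b - r, by omega⟩
  rw [Nat.add_sub_cancel]
  have h := Nat.div_add_mod t k
  have hmod := Nat.mod_lt t (by omega : 0 < k)
  generalize t / k = q, t % k = m at *
  have h2D : 2 * D ≤ k * D := Nat.mul_le_mul_right D hk
  constructor <;> refine Nat.le_of_mul_le_mul_left ?_ (by omega : 0 < k) <;> nlinarith

def windowSeqs (w : ℕ → ℤ) (k D E : ℕ) : Set (ℕ → ℚ) :=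
  (fun x : ℕ × ℕ => shiftedSubseq w (k ^ x.1) x.2) '' (Set.Iic E ×ˢ Set.Iic (2 * k ^ E + D))

theorem windowSeqs_finite (w : ℕ → ℤ) (k D E : ℕ) : (windowSeqs w k D E).Finite :=
  ((Set.finite_Iic E).prod (Set.finite_Iic _)).image _

theorem shiftedSubseq_pow_mem (hk : 2 ≤ k)
    (hw1 : ∀ i m : ℕ, m ≤ k - 2 → w (k * i + r + m) = u (k * i + m))
    (hw2 : ∀ i : ℕ, w (k * i + r + (k - 1)) = w (i + s) + d i)
    (hu : Periodic u p) (hd : Periodic d p) {D E : ℕ} (hD : r + k + k * s ≤ D)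
    (hE : D + r ≤ k ^ (E + 1)) (e : ℕ) :
    ∀ b, k ^ e ≤ b + D → b ≤ 2 * k ^ e + D →
      shiftedSubseq w (k ^ e) b ∈ Submodule.span ℚ (windowSeqs w k D E) ⊔ periodicFrom ℚ 1 p := by
  have base : ∀ e ≤ E, ∀ b, b ≤ 2 * k ^ e + D →
      shiftedSubseq w (k ^ e) b ∈ Submodule.span ℚ (windowSeqs w k D E) ⊔ periodicFrom ℚ 1 p :=
    fun e he b hb => Submodule.mem_sup_left <| Submodule.subset_span
      ⟨(e, b), ⟨he, hb.trans (by gcongr; omega)⟩, rfl⟩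
  induction e with
  | zero => exact fun b _ => base 0 (Nat.zero_le E) b
  | succ e ih =>
    intro b hlow hhigh
    by_cases he : e + 1 ≤ E
    · exact base (e + 1) he b hhigh
    have hb : r ≤ b := by
      have : k ^ (E + 1) ≤ k ^ (e + 1) := Nat.pow_le_pow_right (by omega) (by omega)
      omega
    rw [pow_succ'] at hlow hhigh ⊢
    have hmod := Nat.mod_lt (b - r) (by omega : 0 < k)
    by_cases hm : (b - r) % k ≤ k - 2
    · exact Submodule.mem_sup_right
        (shiftedSubseq_mem_periodicFrom_of_mod_le_sub_two hw1 hu hb hm _)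
    obtain ⟨hlow', hhigh'⟩ := bounds_sub_div_add hk hD hb hlow hhigh
    refine (Submodule.sub_mem_iff_left _ (ih _ hlow' hhigh')).mp (Submodule.mem_sup_right ?_)
    exact shiftedSubseq_sub_mem_periodicFrom_of_mod_eq_sub_one (by omega) hw2 hd hb
      (by omega) _

end Recurrence

theorem stmt11_general (k ℓ : ℕ) (hk : 2 ≤ k) (hℓ : 1 ≤ ℓ)
    (d u : ℕ → ℤ) (hd : ∀ i, d (i + ℓ) = d i) (hu : ∀ i, u (i + k * ℓ) = u i)
    (r s : ℕ)
    (w : ℕ → ℤ)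
    (hw1 : ∀ i : ℕ, ∀ m : ℕ, m ≤ k - 2 → w (k * i + r + m) = u (k * i + m))
    (hw2 : ∀ i : ℕ, w (k * i + r + (k - 1)) = w (i + s) + d i) :
    kRegular k w := by
  set D := r + k + k * s
  have hd' : Periodic d (k * ℓ) := by simpa using Periodic.nat_mul hd k
  have hE : D + r ≤ k ^ (D + r + 1) := by
    have : D + r + 1 < k ^ (D + r + 1) := Nat.lt_pow_self (by omega)
    omega
  have := FiniteDimensional.span_of_finite ℚ (windowSeqs_finite w k D (D + r))
  have := finiteDimensional_periodicFrom (K := ℚ) (N := 1) (p := k * ℓ)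
    (Nat.mul_pos (by omega) hℓ)
  refine Submodule.finiteDimensional_of_le
    (S₂ := Submodule.span ℚ (windowSeqs w k D (D + r)) ⊔ periodicFrom ℚ 1 (k * ℓ))
    (Submodule.span_le.mpr ?_)
  rintro _ ⟨e, j, hj, rfl⟩
  have hmem := shiftedSubseq_pow_mem hk hw1 hw2 hu hd' le_rfl hE e (k ^ e + j) (by omega)
    (by omega)
  refine (Submodule.sub_mem_iff_left _ hmem).mp (Submodule.mem_sup_right fun i hi => ?_)
  simp only [Pi.sub_apply, shiftedSubseq_add_self w _ _ hi,
    shiftedSubseq_add_self w _ _ (show 1 ≤ i + k * ℓ by omega), sub_self]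

theorem stmt11 (k ℓ : ℕ) (hk : 2 ≤ k) (hℓ : 1 ≤ ℓ)
    (d u : ℕ → ℤ) (hd : ∀ i, d (i + ℓ) = d i) (hu : ∀ i, u (i + k * ℓ) = u i)
    (r s : ℕ) (hrs : (0 : ℤ) ≤ (r : ℤ) - s + k - 1)
    (w : ℕ → ℤ)
    (hw1 : ∀ i : ℕ, ∀ m : ℕ, m ≤ k - 2 → w (k * i + r + m) = u (k * i + m))
    (hw2 : ∀ i : ℕ, w (k * i + r + (k - 1)) = w (i + s) + d i) :
    kRegular k w :=
  stmt11_general k ℓ hk hℓ d u hd hu r s w hw1 hw2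
end

section
/- Let w(i) be the sequence of letters of the lexicographically least 5/4-power-free word on ℕ. Given the recurrence w(6i + 123061) = w(i + 5920) + c(i), where c(i) = 3 if i ≡ 0, 2 (mod 8), c(i) = 1 if i ≡ 4, 6 (mod 8), and c(i) = 2 if i is odd, and given that the letters in the other five residue classes mod 6 are eventually periodic (as in Proposition 'background': for i ≥ 1127, w(6i) and w(6i+2) and w(6i+4) are periodic in i mod 4, w(6i+3) = 1, w(6i+5) = 0), the sequence w(i)_{i≥0} is 6-regular. -/
namespace Stmt14Aux

/-- The periodic correction term of the recurrence. -/
def CC : ℕ → ℤ := fun p => if p % 2 = 1 then 2 else if p % 8 = 0 ∨ p % 8 = 2 then 3 else 1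

lemma CC_congr {p p' : ℕ} (h : p % 8 = p' % 8) : CC p = CC p' := by
  have h2 : p % 2 = p' % 2 := by omega
  simp only [CC, h2, h]

/-- The eventual values of `w (6*m + r)` for `r ≠ 1`, as a function of `m % 4`. -/
def WR : ℕ → ℕ → ℤ := fun r m =>
  if r = 3 then 1 else if r = 5 then 0 else
  if r = 0 then (if m % 4 = 0 ∨ m % 4 = 3 then 0 else 1) else
  if r = 2 then (if m % 4 = 0 ∨ m % 4 = 1 then 0 else 1) else
  (if m % 4 = 0 ∨ m % 4 = 3 then 1 else 0)

lemma WR_congr (r : ℕ) {m m' : ℕ} (h : m % 4 = m' % 4) : WR r m = WR r m' := by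
  simp only [WR, h]

/-- A finite generating set. -/
def gens (w : ℕ → ℤ) : Set (ℕ → ℚ) :=
  (((fun n => fun i => if i = n then (1:ℚ) else 0) '' (Set.Iio 38111)) ∪
  ((fun a => fun i => if i % 8 = a then (1:ℚ) else 0) '' (Set.Iio 8))) ∪
  ((fun t => fun i => ((w (i - t) : ℤ) : ℚ)) '' (Set.Iic 17600))

lemma gens_finite (w : ℕ → ℤ) : (gens w).Finite :=
  (((Set.finite_Iio _).image _).union ((Set.finite_Iio _).image _)).union
    ((Set.finite_Iic _).image _)

lemma mem_span_small (w : ℕ → ℤ) (f : ℕ → ℚ) (hf : ∀ i, 38110 ≤ i → f i = 0) :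
    f ∈ Submodule.span ℚ (gens w) := by
  have hfe : f = ∑ n ∈ Finset.range 38111, f n • (fun i => if i = n then (1:ℚ) else 0) := by
    funext i
    rw [Finset.sum_apply]
    simp only [Pi.smul_apply, smul_eq_mul, mul_ite, mul_one, mul_zero]
    rw [Finset.sum_ite_eq (Finset.range 38111) i f]
    by_cases h : i < 38111
    · simp [h]
    · simp only [Finset.mem_range, h, if_false]
      exact hf i (by omega)
  rw [hfe]
  refine Submodule.sum_mem _ fun n hn => Submodule.smul_mem _ _ (Submodule.subset_span ?_)
  exact Or.inl (Or.inl ⟨n, Finset.mem_range.mp hn, rfl⟩)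

lemma mem_span_periodic (w : ℕ → ℤ) (c : ℕ → ℚ) :
    (fun i => c (i % 8)) ∈ Submodule.span ℚ (gens w) := by
  have hfe : (fun i => c (i % 8)) =
      ∑ a ∈ Finset.range 8, c a • (fun i => if i % 8 = a then (1:ℚ) else 0) := by
    funext i
    rw [Finset.sum_apply]
    simp only [Pi.smul_apply, smul_eq_mul, mul_ite, mul_one, mul_zero]
    rw [Finset.sum_ite_eq (Finset.range 8) (i % 8) c]
    simp [Nat.mod_lt i (by norm_num : 0 < 8)]
  rw [hfe]
  refine Submodule.sum_mem _ fun a ha => Submodule.smul_mem _ _ (Submodule.subset_span ?_)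
  exact Or.inl (Or.inr ⟨a, Finset.mem_range.mp ha, rfl⟩)

lemma mem_span_shift (w : ℕ → ℤ) {t : ℕ} (ht : t ≤ 17600) :
    (fun i => ((w (i - t) : ℤ) : ℚ)) ∈ Submodule.span ℚ (gens w) :=
  Submodule.subset_span (Or.inr ⟨t, Set.mem_Iic.mpr ht, rfl⟩)

lemma WR_eq (w : ℕ → ℤ)
    (hbg : ∀ i : ℕ, 1127 ≤ i →
      w (6 * i) = (if i % 4 = 0 ∨ i % 4 = 3 then 0 else 1) ∧
      w (6 * i + 2) = (if i % 4 = 0 ∨ i % 4 = 1 then 0 else 1) ∧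
      w (6 * i + 3) = 1 ∧
      w (6 * i + 4) = (if i % 4 = 0 ∨ i % 4 = 3 then 1 else 0) ∧
      w (6 * i + 5) = 0)
    {r m : ℕ} (hr : r < 6) (hr1 : r ≠ 1) (hm : 1127 ≤ m) :
    w (6 * m + r) = WR r m := by
  obtain ⟨h0, h2, h3, h4, h5⟩ := hbg m hm
  interval_cases r <;> simp_all [WR]

lemma main (w : ℕ → ℤ)
    (hbg : ∀ i : ℕ, 1127 ≤ i →
      w (6 * i) = (if i % 4 = 0 ∨ i % 4 = 3 then 0 else 1) ∧
      w (6 * i + 2) = (if i % 4 = 0 ∨ i % 4 = 1 then 0 else 1) ∧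
      w (6 * i + 3) = 1 ∧
      w (6 * i + 4) = (if i % 4 = 0 ∨ i % 4 = 3 then 1 else 0) ∧
      w (6 * i + 5) = 0)
    (hrec : ∀ i : ℕ, w (6 * i + 123061) = w (i + 5920) +
      (if i % 2 = 1 then 2 else if i % 8 = 0 ∨ i % 8 = 2 then 3 else 1)) :
    ∀ e : ℕ, ∀ z : ℤ, -17600 ≤ z → z < 6 ^ e →
      ∃ g ∈ Submodule.span ℚ (gens w), ∀ i : ℕ, 38110 ≤ i →
        g i = ((w ((6 ^ e * (i : ℤ) + z).toNat) : ℤ) : ℚ) := by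
  intro e
  induction e with
  | zero =>
    intro z hz1 hz2
    rw [pow_zero] at hz2
    refine ⟨fun i => ((w (i - (-z).toNat) : ℤ) : ℚ), mem_span_shift w (by omega), ?_⟩
    intro i hi
    show ((w (i - (-z).toNat) : ℤ) : ℚ) = _
    have harg : i - (-z).toNat = ((6:ℤ) ^ 0 * (i : ℤ) + z).toNat := by
      simp only [pow_zero, one_mul]
      omega
    rw [harg]
  | succ e ih =>
    intro z hz1 hz2
    obtain ⟨r, hr6, hzqr⟩ : ∃ r : ℕ, r < 6 ∧ 6 * (z / 6) + (r : ℤ) = z := by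
      refine ⟨(z % 6).toNat, ?_, ?_⟩
      · have h1 := Int.emod_lt_of_pos z (show (0:ℤ) < 6 by norm_num)
        have h2 := Int.emod_nonneg z (show (6:ℤ) ≠ 0 by norm_num)
        omega
      · have h1 := Int.mul_ediv_add_emod z 6
        have h2 := Int.emod_nonneg z (show (6:ℤ) ≠ 0 by norm_num)
        omega
    set q : ℤ := z / 6 with hqdef
    have hz2' : z < 6 ^ e * 6 := by rw [pow_succ] at hz2; exact hz2
    have hq1 : -2934 ≤ q := by omega
    have hq2 : q < 6 ^ e := by omega
    set qn : ℕ := (q + 17600).toNat with hqndef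
    have hqn : (qn : ℤ) = q + 17600 := Int.toNat_of_nonneg (by omega)
    by_cases hr1 : r = 1
    · -- the recurrence case
      obtain ⟨g₁, hg₁mem, hg₁⟩ := ih (q - 14590) (by omega) (by omega)
      refine ⟨g₁ + fun i => ((CC (6 ^ e * (i % 8) + qn + 2) : ℤ) : ℚ),
        Submodule.add_mem _ hg₁mem
          (mem_span_periodic w (fun a => ((CC (6 ^ e * a + qn + 2) : ℤ) : ℚ))), ?_⟩
      intro i hi
      have hcast : (6:ℤ) ^ e * (i : ℤ) = ((6 ^ e * i : ℕ) : ℤ) := by push_cast; ring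
      have hile : i ≤ 6 ^ e * i := Nat.le_mul_of_pos_left i (by positivity)
      set m : ℕ := ((6:ℤ) ^ e * (i : ℤ) + q).toNat with hmdef
      have hmn : m + 17600 = 6 ^ e * i + qn := by omega
      have hmge : 35176 ≤ m := by omega
      have hpow : (6:ℤ) ^ (e + 1) * (i : ℤ) = 6 * ((6:ℤ) ^ e * (i : ℤ)) := by
        rw [pow_succ]; ring
      have hkey : ((6:ℤ) ^ (e + 1) * (i : ℤ) + z).toNat = 6 * m + 1 := by omega
      have hrecm := hrec (m - 20510)
      have e1 : 6 * (m - 20510) + 123061 = 6 * m + 1 := by omega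
      have e2 : (m - 20510) + 5920 = m - 14590 := by omega
      rw [e1, e2] at hrecm
      have harg : ((6:ℤ) ^ e * (i : ℤ) + (q - 14590)).toNat = m - 14590 := by omega
      have hmod : (6 ^ e * (i % 8) + qn + 2) % 8 = (m - 20510) % 8 := by
        have h1 : (6 ^ e * (i % 8)) % 8 = (6 ^ e * i) % 8 :=
          (Nat.mod_modEq i 8).mul_left (6 ^ e)
        omega
      have hCCdef : (if (m - 20510) % 2 = 1 then (2:ℤ)
          else if (m - 20510) % 8 = 0 ∨ (m - 20510) % 8 = 2 then 3 else 1) = CC (m - 20510) :=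
        rfl
      rw [hCCdef] at hrecm
      simp only [Pi.add_apply]
      rw [hkey, hrecm, hg₁ i hi, harg, CC_congr hmod]
      push_cast
      ring
    · -- the eventually periodic case
      refine ⟨fun i => ((WR r (6 ^ e * (i % 8) + qn) : ℤ) : ℚ),
        mem_span_periodic w (fun a => ((WR r (6 ^ e * a + qn) : ℤ) : ℚ)), ?_⟩
      intro i hi
      show ((WR r (6 ^ e * (i % 8) + qn) : ℤ) : ℚ) = _
      have hcast : (6:ℤ) ^ e * (i : ℤ) = ((6 ^ e * i : ℕ) : ℤ) := by push_cast; ring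
      have hile : i ≤ 6 ^ e * i := Nat.le_mul_of_pos_left i (by positivity)
      set m : ℕ := ((6:ℤ) ^ e * (i : ℤ) + q).toNat with hmdef
      have hmn : m + 17600 = 6 ^ e * i + qn := by omega
      have hmge : 35176 ≤ m := by omega
      have hpow : (6:ℤ) ^ (e + 1) * (i : ℤ) = 6 * ((6:ℤ) ^ e * (i : ℤ)) := by
        rw [pow_succ]; ring
      have hkey : ((6:ℤ) ^ (e + 1) * (i : ℤ) + z).toNat = 6 * m + r := by omega
      have hmod4 : (6 ^ e * (i % 8) + qn) % 4 = m % 4 := by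
        have h1 : (6 ^ e * (i % 8)) % 8 = (6 ^ e * i) % 8 :=
          (Nat.mod_modEq i 8).mul_left (6 ^ e)
        omega
      have hw : w (6 * m + r) = WR r m := WR_eq w hbg hr6 hr1 (by omega)
      rw [hkey, hw, WR_congr r hmod4]

end Stmt14Aux

theorem stmt14 (w : ℕ → ℤ)
    (hbg : ∀ i : ℕ, 1127 ≤ i →
      w (6 * i) = (if i % 4 = 0 ∨ i % 4 = 3 then 0 else 1) ∧
      w (6 * i + 2) = (if i % 4 = 0 ∨ i % 4 = 1 then 0 else 1) ∧
      w (6 * i + 3) = 1 ∧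
      w (6 * i + 4) = (if i % 4 = 0 ∨ i % 4 = 3 then 1 else 0) ∧
      w (6 * i + 5) = 0)
    (hrec : ∀ i : ℕ, w (6 * i + 123061) = w (i + 5920) +
      (if i % 2 = 1 then 2 else if i % 8 = 0 ∨ i % 8 = 2 then 3 else 1)) :
    kRegular 6 w := by
  show FiniteDimensional ℚ (Submodule.span ℚ (kKernel 6 w))
  have hle : Submodule.span ℚ (kKernel 6 w) ≤ Submodule.span ℚ (Stmt14Aux.gens w) := by
    rw [Submodule.span_le]
    rintro f ⟨e, j, hj, rfl⟩
    have hj' : (j : ℤ) < 6 ^ e := by exact_mod_cast hj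
    obtain ⟨g, hg, hgi⟩ := Stmt14Aux.main w hbg hrec e j (by omega) hj'
    have hfg : (fun i => ((w (6 ^ e * i + j) : ℤ) : ℚ)) =
        g + ((fun i => ((w (6 ^ e * i + j) : ℤ) : ℚ)) - g) := by ring
    rw [SetLike.mem_coe, hfg]
    refine Submodule.add_mem _ hg (Stmt14Aux.mem_span_small w _ ?_)
    intro i hi
    have hcast : (6:ℤ) ^ e * (i : ℤ) = ((6 ^ e * i : ℕ) : ℤ) := by push_cast; ring
    have harg : ((6:ℤ) ^ e * (i : ℤ) + (j : ℤ)).toNat = 6 ^ e * i + j := by omega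
    have hv := hgi i hi
    rw [harg] at hv
    simp [Pi.sub_apply, hv]
  have hfd : FiniteDimensional ℚ (Submodule.span ℚ (Stmt14Aux.gens w)) :=
    FiniteDimensional.span_of_finite ℚ (Stmt14Aux.gens_finite w)
  exact Submodule.finiteDimensional_of_le hle
end

section
/- Suppose a sequence w : ℕ → ℤ satisfies w(6i + 128125) = w(i + 6764) + c(i) for all i ≥ 0, where c(i) = 1 if i ≡ 0, 2 (mod 8), c(i) = 3 if i ≡ 4, 6 (mod 8), c(i) = 2 if i odd, and also w(6i + 123061) = w(i + 5920) + c′(i) for 0 ≤ i ≤ 843 where c′(i) = 3 if i ≡ 0,2 (mod 8), 1 if i ≡ 4,6 (mod 8), 2 if i odd. Then w(6i + 123061) = w(i + 5920) + c′(i) for all i ≥ 0. -/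
set_option maxRecDepth 4000

theorem stmt17 (w : ℕ → ℤ)
    (h1 : ∀ i : ℕ, w (6 * i + 128125) = w (i + 6764) +
      (if i % 2 = 1 then 2 else if i % 8 = 0 ∨ i % 8 = 2 then 1 else 3))
    (h2 : ∀ i : ℕ, i ≤ 843 → w (6 * i + 123061) = w (i + 5920) +
      (if i % 2 = 1 then 2 else if i % 8 = 0 ∨ i % 8 = 2 then 3 else 1)) :
    ∀ i : ℕ, w (6 * i + 123061) = w (i + 5920) +
      (if i % 2 = 1 then 2 else if i % 8 = 0 ∨ i % 8 = 2 then 3 else 1) := by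
  intro i
  by_cases h : i ≤ 843
  · exact h2 i h
  · have hi : i = (i - 844) + 844 := by omega
    set j := i - 844 with hj
    rw [hi]
    have e1 : 6 * (j + 844) + 123061 = 6 * j + 128125 := by ring
    have e2 : j + 844 + 5920 = j + 6764 := by ring
    rw [e1, e2, h1 j]
    congr 1
    split_ifs <;> omega
end

section
/- Let k ≥ 2, and let r, s ≥ 0 with r − s + k − 1 ≥ 0 and (r − s)/(k − 1) an integer. Define J = s − (r − s + k − 1)/(k − 1). Suppose w : ℕ → ℤ satisfies w(ki + r + k − 1) = w(i + s) + d(i) for a periodic sequence d with period ℓ. Then for all e large enough that kᵉ i − (r − s + k − 1)/(k − 1) ≥ 0 for all i ≥ 1, and for all i ≥ 1: w(k^{e+1} i + J) = w(kᵉ i + J) + d(kᵉ i − (r − s + k − 1)/(k − 1)). -/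
theorem stmt18 (k : ℕ) (hk : 2 ≤ k) (r s : ℕ) (ℓ : ℕ) (hℓ : 1 ≤ ℓ)
    (d : ℕ → ℤ) (hd : ∀ i, d (i + ℓ) = d i)
    (hrs : (0 : ℤ) ≤ (r : ℤ) - s + k - 1)
    (q : ℕ) (hq : (q : ℤ) * ((k : ℤ) - 1) = (r : ℤ) - s + k - 1)
    (J : ℕ) (hJ : (J : ℤ) = (s : ℤ) - q)
    (w : ℕ → ℤ) (hw : ∀ i : ℕ, w (k * i + r + (k - 1)) = w (i + s) + d i)
    (e : ℕ) (he : ∀ i : ℕ, 1 ≤ i → q ≤ k ^ e * i) :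
    ∀ i : ℕ, 1 ≤ i →
      w (k ^ (e + 1) * i + J) = w (k ^ e * i + J) + d (k ^ e * i - q) := by
  intro i hi
  have h1k : 1 ≤ k := by omega
  have hN : q ≤ k ^ e * i := he i hi
  have key := hw (k ^ e * i - q)
  have hkk : k * (k ^ e * i) = k ^ (e + 1) * i := by ring
  have hqk : (q : ℤ) * k - q = (r : ℤ) - s + k - 1 := by linarith [hq]
  have hkq : k * (k ^ e * i - q) = k * (k ^ e * i) - k * q :=
    Nat.mul_sub k (k ^ e * i) q
  have hle : k * q ≤ k ^ (e + 1) * i := by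
    calc k * q ≤ k * (k ^ e * i) := Nat.mul_le_mul_left _ hN
      _ = k ^ (e + 1) * i := hkk
  have h1 : k * (k ^ e * i - q) + r + (k - 1) = k ^ (e + 1) * i + J := by
    rw [hkq, hkk]
    zify [hle, h1k]
    push_cast at hqk hJ ⊢
    nlinarith [hqk, hJ]
  have h2 : k ^ e * i - q + s = k ^ e * i + J := by omega
  rw [h1, h2] at key
  exact key
end
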